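/- For the second fundamental form sff(X,Y) = (1/2)·diag(X₀Y₀^T + Y₀X₀^T, -(X₀^T Y₀ + Y₀^T X₀)) of the Grassmannian in the involution model, the Gauss equation holds: ⟨sff(Y,Z), sff(X,W)⟩ - ⟨sff(X,Z), sff(Y,W)⟩ = (1/4)·tr([[X,Y],Z]·W), where X,Y,Z,W are the corresponding block anti-diagonal symmetric matrices. -/
import Mathlib

open Matrix

def tr4 {k m : ℕ} (A B C D : Matrix (Fin k) (Fin m) ℝ) : ℝ :=
  (A * (Bᵀ * (C * Dᵀ))).trace

theorem tr4_def {k m : ℕ} (A B C D : Matrix (Fin k) (Fin m) ℝ) :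
    tr4 A B C D = (A * (Bᵀ * (C * Dᵀ))).trace := rfl

theorem tr4_cyc {k m : ℕ} (A B C D : Matrix (Fin k) (Fin m) ℝ) :
    tr4 A B C D = tr4 C D A B := by
  simpa [tr4, Matrix.mul_assoc] using trace_mul_comm (A * Bᵀ) (C * Dᵀ)

theorem tr4_rev {k m : ℕ} (A B C D : Matrix (Fin k) (Fin m) ℝ) :
    tr4 A B C D = tr4 D C B A := by
  rw [tr4_def, ← Matrix.trace_transpose]
  simp [tr4, Matrix.transpose_mul, Matrix.mul_assoc]

theorem tr4_T {k m : ℕ} (A B C D : Matrix (Fin k) (Fin m) ℝ) :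
    (Aᵀ * (B * (Cᵀ * D))).trace = tr4 D A B C := by
  simpa [tr4, Matrix.mul_assoc] using trace_mul_comm (Aᵀ * (B * Cᵀ)) D

theorem trace_fromBlocks' {k m : ℕ} (A : Matrix (Fin k) (Fin k) ℝ) (B : Matrix (Fin k) (Fin m) ℝ)
    (C : Matrix (Fin m) (Fin k) ℝ) (D : Matrix (Fin m) (Fin m) ℝ) :
    (Matrix.fromBlocks A B C D).trace = A.trace + D.trace := by
  simp [Matrix.trace, Fintype.sum_sum_type, fromBlocks, Matrix.diag]

theorem gauss_equation_grassmannian (k m : ℕ)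
    (X₀ Y₀ Z₀ W₀ : Matrix (Fin k) (Fin m) ℝ) :
    (let sff := fun (A₀ B₀ : Matrix (Fin k) (Fin m) ℝ) =>
      ((1/2 : ℝ) •
        Matrix.fromBlocks (A₀ * B₀ᵀ + B₀ * A₀ᵀ) 0 0 (-(A₀ᵀ * B₀ + B₀ᵀ * A₀)) :
          Matrix (Fin k ⊕ Fin m) (Fin k ⊕ Fin m) ℝ)
     let X := Matrix.fromBlocks 0 X₀ X₀ᵀ 0
     let Y := Matrix.fromBlocks 0 Y₀ Y₀ᵀ 0
     let Z := Matrix.fromBlocks 0 Z₀ Z₀ᵀ 0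
     let W := Matrix.fromBlocks 0 W₀ W₀ᵀ 0
     ((sff Y₀ Z₀)ᵀ * sff X₀ W₀).trace - ((sff X₀ Z₀)ᵀ * sff Y₀ W₀).trace =
       (1/4 : ℝ) * (((X * Y - Y * X) * Z - Z * (X * Y - Y * X)) * W).trace) := by
  simp only [Matrix.transpose_smul, Matrix.fromBlocks_transpose, Matrix.smul_mul,
    Matrix.mul_smul, Matrix.fromBlocks_multiply, Matrix.sub_mul, Matrix.mul_sub,
    Matrix.trace_smul, Matrix.trace_sub, Matrix.trace_add, trace_fromBlocks',
    Matrix.transpose_add, Matrix.transpose_neg, Matrix.transpose_mul, Matrix.transpose_transpose,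
    Matrix.transpose_zero, Matrix.add_mul, Matrix.mul_add, Matrix.neg_mul, Matrix.mul_neg,
    Matrix.zero_mul, Matrix.mul_zero, add_zero, zero_add, Matrix.trace_neg, smul_eq_mul]
  simp only [Matrix.mul_assoc]
  simp only [tr4_T, ← tr4_def]
  have eXYZW : tr4 X₀ Y₀ Z₀ W₀ = tr4 W₀ Z₀ Y₀ X₀ := tr4_rev _ _ _ _
  have eXZWY : tr4 X₀ Z₀ W₀ Y₀ = tr4 W₀ Y₀ X₀ Z₀ := tr4_cyc _ _ _ _
  have eXZYW : tr4 X₀ Z₀ Y₀ W₀ = tr4 W₀ Y₀ Z₀ X₀ := tr4_rev _ _ _ _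
  have eYXZW : tr4 Y₀ X₀ Z₀ W₀ = tr4 W₀ Z₀ X₀ Y₀ := tr4_rev _ _ _ _
  have eYZWX : tr4 Y₀ Z₀ W₀ X₀ = tr4 W₀ X₀ Y₀ Z₀ := tr4_cyc _ _ _ _
  have eYZXW : tr4 Y₀ Z₀ X₀ W₀ = tr4 W₀ X₀ Z₀ Y₀ := tr4_rev _ _ _ _
  have eZXWY : tr4 Z₀ X₀ W₀ Y₀ = tr4 W₀ Y₀ Z₀ X₀ := tr4_cyc _ _ _ _
  have eZXYW : tr4 Z₀ X₀ Y₀ W₀ = tr4 W₀ Y₀ X₀ Z₀ := tr4_rev _ _ _ _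
  have eZYWX : tr4 Z₀ Y₀ W₀ X₀ = tr4 W₀ X₀ Z₀ Y₀ := tr4_cyc _ _ _ _
  have eZYXW : tr4 Z₀ Y₀ X₀ W₀ = tr4 W₀ X₀ Y₀ Z₀ := tr4_rev _ _ _ _
  rw [eXYZW, eXZWY, eXZYW, eYXZW, eYZWX, eYZXW, eZXWY, eZXYW, eZYWX, eZYXW]
  ring
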